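/- The Lie derivative of the linear output g(x) = Cx along the vector field f(x) = A x^{[k−1]} satisfies L_f g(x) = C A x^{[k−1]}, and the second Lie derivative satisfies L_f^2 g(x) = C A B_2 x^{[2k−3]}, where B_2 = Σ_{i=1}^{k−1} I ⊗ ⋯ ⊗ A ⊗ ⋯ ⊗ I (A in the i-th of k−1 positions). -/

import Mathlib

open scoped Classical
open Finset

noncomputable section

/-- The `i`-fold Kronecker power of a vector `x ∈ ℝⁿ`, indexed by tuples
`Fin i → Fin n`. -/
def kronPow {n : ℕ} (x : Fin n → ℝ) (i : ℕ) : (Fin i → Fin n) → ℝ :=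
  fun j => ∏ t, x (j t)

/-- The Kronecker factor matrix `I ⊗ ⋯ ⊗ A ⊗ ⋯ ⊗ I`, with
`A ∈ ℝ^{n × n^{k-1}}` in the `i`-th of `m` factor positions and the `n × n`
identity in the others, as an `n^m × n^{m-1+(k-1)}` matrix indexed by tuples. -/
def kronFactor (n k m : ℕ) (A : Matrix (Fin n) (Fin (k - 1) → Fin n) ℝ) (i : Fin m) :
    Matrix (Fin m → Fin n) (Fin (m - 1 + (k - 1)) → Fin n) ℝ :=
  Matrix.of fun r c =>
    if ((∀ t : Fin m, (t : ℕ) < (i : ℕ) →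
          r t = if hp : (t : ℕ) < m - 1 + (k - 1) then c ⟨t, hp⟩ else r t) ∧
        (∀ t : Fin m, (i : ℕ) < (t : ℕ) →
          r t = if hp : (t : ℕ) - 1 + (k - 1) < m - 1 + (k - 1) then
              c ⟨(t : ℕ) - 1 + (k - 1), hp⟩ else r t))
    then A (r i) (fun s =>
      if hp : (i : ℕ) + (s : ℕ) < m - 1 + (k - 1) then c ⟨(i : ℕ) + (s : ℕ), hp⟩ else r i)
    else 0


/-- The Lie derivative of a scalar function `h` along a vector field `f` on
`ℝⁿ`: `L_f h (x) = ⟨dh(x), f(x)⟩`. -/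
def lieDeriv {n : ℕ} (f : (Fin n → ℝ) → (Fin n → ℝ)) (h : (Fin n → ℝ) → ℝ) :
    (Fin n → ℝ) → ℝ :=
  fun x => fderiv ℝ h x (f x)

lemma natprod (p : ℕ) (i : ℕ) (hi : i < p) (F G : ℕ → ℝ)
    (h1 : ∀ t, t < i → F t = G t)
    (h2 : ∀ t, i < t → t < p → G t = F (t - 1 + p)) :
    ∏ u ∈ range (p - 1 + p), F u
      = (∏ s ∈ range p, F (i + s)) * ∏ t ∈ (range p).erase i, G t := by
  have hsplit : (range p).erase i = Finset.Ico 0 i ∪ Finset.Ico (i+1) p := by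
    ext u; simp [Finset.mem_Ico]; omega
  have hdisj : Disjoint (Finset.Ico 0 i) (Finset.Ico (i+1) p) := by
    simp [Finset.disjoint_left, Finset.mem_Ico]; omega
  rw [hsplit, Finset.prod_union hdisj]
  have hL : ∏ u ∈ range (p - 1 + p), F u
      = (∏ u ∈ Finset.Ico 0 i, F u) * (∏ u ∈ Finset.Ico i (i+p), F u)
        * ∏ u ∈ Finset.Ico (i+p) (p-1+p), F u := by
    rw [mul_assoc, Finset.prod_Ico_consecutive F (by omega : i ≤ i + p) (by omega : i + p ≤ p - 1 + p),
      Finset.prod_Ico_consecutive F (by omega : 0 ≤ i) (by omega : i ≤ p - 1 + p),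
      Nat.Ico_zero_eq_range]
  rw [hL]
  have hmid : ∏ u ∈ Finset.Ico i (i+p), F u = ∏ s ∈ range p, F (i + s) := by
    rw [Finset.prod_Ico_eq_prod_range]; simp
  have hhead : ∏ u ∈ Finset.Ico 0 i, F u = ∏ u ∈ Finset.Ico 0 i, G u :=
    Finset.prod_congr rfl fun u hu => h1 u (by simpa [Finset.mem_Ico] using hu)
  have htail : ∏ u ∈ Finset.Ico (i+p) (p-1+p), F u = ∏ t ∈ Finset.Ico (i+1) p, G t := by
    rw [Finset.prod_Ico_eq_prod_range, Finset.prod_Ico_eq_prod_range]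
    have he : p - 1 + p - (i + p) = p - (i + 1) := by omega
    rw [he]
    refine Finset.prod_congr rfl fun s hs => ?_
    have hs' : s < p - (i + 1) := by simpa using hs
    rw [h2 (i + 1 + s) (by omega) (by omega)]
    congr 1
    omega
  rw [hmid, hhead, htail]
  ring


section Key

variable (n k : ℕ) (hk : 2 ≤ k) (A : Matrix (Fin n) (Fin (k-1) → Fin n) ℝ)
    (x : Fin n → ℝ) (i : Fin (k-1)) (jv : Fin (k-1) → Fin n)

lemma key (hk2 : 2 ≤ k) :
    (∏ t ∈ Finset.univ.erase i, x (jv t)) * (A.mulVec (kronPow x (k-1))) (jv i)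
      = (kronFactor n k (k-1) A i).mulVec (kronPow x ((k-1) - 1 + (k-1))) jv := by
  have hk1 : 1 ≤ k - 1 := by omega
  have hil : (i : ℕ) < k - 1 := i.isLt
  -- the condition predicate
  set P : (Fin (k-1-1+(k-1)) → Fin n) → Prop := fun c =>
    (∀ t : Fin (k-1), (t : ℕ) < (i : ℕ) →
        jv t = c ⟨t, by have := t.isLt; have := i.isLt; omega⟩) ∧
    (∀ t : Fin (k-1), ∀ _ht : (i : ℕ) < (t : ℕ),
        jv t = c ⟨(t : ℕ) - 1 + (k-1), by have := t.isLt; omega⟩) with hP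
  have hshift : ∀ (s : Fin (k-1)), (i : ℕ) + (s : ℕ) < k - 1 - 1 + (k-1) := by
    intro s; have := s.isLt; have := i.isLt; omega
  have hent : ∀ c : Fin (k-1-1+(k-1)) → Fin n,
      kronFactor n k (k-1) A i jv c =
        if P c then A (jv i) (fun s => c ⟨(i : ℕ) + (s : ℕ), hshift s⟩) else 0 := by
    intro c
    simp only [kronFactor, Matrix.of_apply]
    refine if_congr ?_ ?_ rfl
    · rw [hP]
      constructor
      · rintro ⟨hA, hB⟩
        refine ⟨fun t ht => ?_, fun t ht => ?_⟩
        · have h' := hA t ht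
          rwa [dif_pos (show (t : ℕ) < k - 1 - 1 + (k-1) by have := t.isLt; omega)] at h'
        · have h' := hB t ht
          rwa [dif_pos (show (t : ℕ) - 1 + (k-1) < k - 1 - 1 + (k-1) by have := t.isLt; omega)] at h'
      · rintro ⟨hA, hB⟩
        refine ⟨fun t ht => ?_, fun t ht => ?_⟩
        · rw [dif_pos (show (t : ℕ) < k - 1 - 1 + (k-1) by have := t.isLt; omega)]
          exact hA t ht
        · rw [dif_pos (show (t : ℕ) - 1 + (k-1) < k - 1 - 1 + (k-1) by have := t.isLt; omega)]
          exact hB t ht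
    · congr 1
      funext s
      rw [dif_pos (hshift s)]
  -- product identity for constrained columns
  have hprod : ∀ c : Fin (k-1-1+(k-1)) → Fin n, P c →
      kronPow x (k-1-1+(k-1)) c
        = kronPow x (k-1) (fun s => c ⟨(i : ℕ) + (s : ℕ), hshift s⟩)
          * ∏ t ∈ Finset.univ.erase i, x (jv t) := by
    intro c hc
    set F : ℕ → ℝ := fun u => if h : u < k-1-1+(k-1) then x (c ⟨u, h⟩) else 1 with hF
    set G : ℕ → ℝ := fun t => if h : t < k-1 then x (jv ⟨t, h⟩) else 1 with hG
    have e1 : kronPow x (k-1-1+(k-1)) c = ∏ u ∈ range (k-1-1+(k-1)), F u := by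
      rw [kronPow, ← Fin.prod_univ_eq_prod_range F]
      exact Finset.prod_congr rfl fun u _ => by simp [hF, u.isLt]
    have e2 : kronPow x (k-1) (fun s => c ⟨(i : ℕ) + (s : ℕ), hshift s⟩)
        = ∏ s ∈ range (k-1), F ((i : ℕ) + s) := by
      rw [kronPow, ← Fin.prod_univ_eq_prod_range (fun s => F ((i : ℕ) + s))]
      exact Finset.prod_congr rfl fun s _ => by simp [hF, hshift s]
    have e3 : ∏ t ∈ Finset.univ.erase i, x (jv t)
        = ∏ t ∈ (range (k-1)).erase (i : ℕ), G t := by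
      refine Finset.prod_nbij' (fun t => (t : ℕ))
        (fun t => if h : t < k - 1 then ⟨t, h⟩ else i) ?_ ?_ ?_ ?_ ?_
      · intro t ht
        simp only [Finset.mem_erase, Finset.mem_univ, and_true] at ht
        simp only [Finset.mem_erase, Finset.mem_range]
        exact ⟨fun h => ht (Fin.ext h), t.isLt⟩
      · intro t ht
        simp only [Finset.mem_erase, Finset.mem_range] at ht
        rw [dif_pos ht.2]
        simp only [Finset.mem_erase, Finset.mem_univ, and_true]
        exact fun h => ht.1 (by simpa using congrArg Fin.val h)
      · intro t _; simp [t.isLt]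
      · intro t ht
        simp only [Finset.mem_erase, Finset.mem_range] at ht
        rw [dif_pos ht.2]
      · intro t ht
        simp [hG, t.isLt]
    rw [e1, e2, e3]
    refine natprod (k-1) i hil F G ?_ ?_
    · intro t ht
      rw [hF, hG]
      simp only
      rw [dif_pos (show t < k-1-1+(k-1) by omega), dif_pos (show t < k-1 by omega)]
      exact congrArg x (hc.1 ⟨t, by omega⟩ ht).symm
    · intro t hit ht
      rw [hF, hG]
      simp only
      rw [dif_pos (show t < k-1 by omega), dif_pos (show t - 1 + (k-1) < k-1-1+(k-1) by omega)]
      exact congrArg x (hc.2 ⟨t, ht⟩ hit)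
  -- now the main computation
  have hRHS : (kronFactor n k (k-1) A i).mulVec (kronPow x ((k-1) - 1 + (k-1))) jv
      = ∑ c ∈ Finset.univ.filter P,
          A (jv i) (fun s => c ⟨(i : ℕ) + (s : ℕ), hshift s⟩)
            * kronPow x (k-1-1+(k-1)) c := by
    rw [Matrix.mulVec, dotProduct]
    rw [Finset.sum_filter]
    refine Finset.sum_congr rfl fun c _ => ?_
    rw [hent c, ite_mul, zero_mul]
  rw [hRHS]
  rw [Matrix.mulVec, dotProduct, Finset.mul_sum]
  -- bijection between constrained columns and free middle blocks
  refine (Finset.sum_nbij' (fun c => fun s : Fin (k-1) => c ⟨(i : ℕ) + (s : ℕ), hshift s⟩)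
    (fun w => fun u : Fin (k-1-1+(k-1)) =>
      if h : (u : ℕ) < (i : ℕ) then jv ⟨u, by omega⟩
      else if h2 : (u : ℕ) < (i : ℕ) + (k-1) then w ⟨(u : ℕ) - (i : ℕ), by omega⟩
      else jv ⟨(u : ℕ) - (k-1) + 1, by have := u.isLt; omega⟩) ?_ ?_ ?_ ?_ ?_).symm
  · intro c _; exact Finset.mem_univ _
  · -- the rebuilt column satisfies P
    intro w _
    simp only [Finset.mem_filter, Finset.mem_univ, true_and]
    rw [hP]
    constructor
    · intro t ht
      dsimp only
      rw [dif_pos ht]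
    · intro t ht
      have h1 : ¬ ((t : ℕ) - 1 + (k-1) < (i : ℕ)) := by omega
      have h2 : ¬ ((t : ℕ) - 1 + (k-1) < (i : ℕ) + (k-1)) := by omega
      dsimp only
      rw [dif_neg h1, dif_neg h2]
      refine congrArg jv (Fin.ext ?_)
      dsimp only
      have := t.isLt; omega
  · -- left inverse on the filter set
    intro c hc
    simp only [Finset.mem_filter, Finset.mem_univ, true_and] at hc
    rw [hP] at hc
    funext u
    dsimp only
    by_cases h1 : (u : ℕ) < (i : ℕ)
    · rw [dif_pos h1]
      have h' := hc.1 ⟨(u : ℕ), by omega⟩ h1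
      exact h'
    · by_cases h2 : (u : ℕ) < (i : ℕ) + (k-1)
      · rw [dif_neg h1, dif_pos h2]
        refine congrArg c (Fin.ext ?_)
        dsimp only
        omega
      · rw [dif_neg h1, dif_neg h2]
        have hu := u.isLt
        have h' := hc.2 ⟨(u : ℕ) - (k-1) + 1, by omega⟩ (by dsimp only; omega)
        rw [h']
        refine congrArg c (Fin.ext ?_)
        dsimp only
        omega
  · -- right inverse
    intro w _
    funext s
    have h1 : ¬ ((i : ℕ) + (s : ℕ) < (i : ℕ)) := by omega
    have h2 : (i : ℕ) + (s : ℕ) < (i : ℕ) + (k-1) := by have := s.isLt; omega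
    dsimp only
    rw [dif_neg h1, dif_pos h2]
    refine congrArg w (Fin.ext ?_)
    dsimp only
    omega
  · -- values agree
    intro c hc
    simp only [Finset.mem_filter, Finset.mem_univ, true_and] at hc
    rw [hprod c hc, kronPow]
    ring

end Key

lemma hasFDerivAt_mulVecOut (m n : ℕ) (C : Matrix (Fin m) (Fin n) ℝ) (a : Fin m)
    (x : Fin n → ℝ) :
    HasFDerivAt (fun y : Fin n → ℝ => C.mulVec y a)
      (∑ b, C a b • (ContinuousLinearMap.proj b : (Fin n → ℝ) →L[ℝ] ℝ)) x := by
  simp only [Matrix.mulVec, dotProduct]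
  exact HasFDerivAt.fun_sum fun b _ =>
    ((ContinuousLinearMap.proj b : (Fin n → ℝ) →L[ℝ] ℝ).hasFDerivAt (x := x)).const_mul (C a b)

lemma hasFDerivAt_mon (n p : ℕ) (w : Fin p → Fin n) (x : Fin n → ℝ) :
    HasFDerivAt (fun y : Fin n → ℝ => ∏ t, y (w t))
      (∑ s, (∏ t ∈ Finset.univ.erase s, x (w t)) •
        (ContinuousLinearMap.proj (w s) : (Fin n → ℝ) →L[ℝ] ℝ)) x :=
  HasFDerivAt.finset_prod fun t _ =>
    (ContinuousLinearMap.proj (w t) : (Fin n → ℝ) →L[ℝ] ℝ).hasFDerivAt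

lemma hasFDerivAt_H (n k m : ℕ) (A : Matrix (Fin n) (Fin (k-1) → Fin n) ℝ)
    (C : Matrix (Fin m) (Fin n) ℝ) (a : Fin m) (x : Fin n → ℝ) :
    HasFDerivAt (fun y : Fin n → ℝ => C.mulVec (A.mulVec (kronPow y (k-1))) a)
      (∑ b, C a b • ∑ w, A b w • ∑ s, (∏ t ∈ Finset.univ.erase s, x (w t)) •
        (ContinuousLinearMap.proj (w s) : (Fin n → ℝ) →L[ℝ] ℝ)) x := by
  simp only [Matrix.mulVec, dotProduct, kronPow]
  exact HasFDerivAt.fun_sum fun b _ =>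
    (HasFDerivAt.fun_sum fun w _ => (hasFDerivAt_mon n (k-1) w x).const_mul (A b w)).const_mul (C a b)


/-- For the system `ẋ = f(x) = A x^{[k-1]}`, `y = Cx`, the first Lie derivative
of the output is `L_f g(x) = C A x^{[k-1]}` and the second is
`L_f² g(x) = C A B₂ x^{[2k-3]}`, where
`B₂ = Σ_{i=1}^{k-1} I ⊗ ⋯ ⊗ A ⊗ ⋯ ⊗ I` (with `A` in the `i`-th of `k-1`
positions, and `2k-3 = (k-1) - 1 + (k-1)`). -/
theorem lieDeriv_output (n k m : ℕ) (hk : 2 ≤ k)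
    (A : Matrix (Fin n) (Fin (k - 1) → Fin n) ℝ)
    (C : Matrix (Fin m) (Fin n) ℝ) (a : Fin m) (x : Fin n → ℝ) :
    lieDeriv (fun y => A.mulVec (kronPow y (k - 1))) (fun y => C.mulVec y a) x
        = C.mulVec (A.mulVec (kronPow x (k - 1))) a ∧
    lieDeriv (fun y => A.mulVec (kronPow y (k - 1)))
        (lieDeriv (fun y => A.mulVec (kronPow y (k - 1))) (fun y => C.mulVec y a)) x
        = C.mulVec (A.mulVec
            ((∑ i : Fin (k - 1), kronFactor n k (k - 1) A i).mulVec
              (kronPow x ((k - 1) - 1 + (k - 1))))) a := by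
  have part1 : ∀ z : Fin n → ℝ,
      lieDeriv (fun y => A.mulVec (kronPow y (k - 1))) (fun y => C.mulVec y a) z
        = C.mulVec (A.mulVec (kronPow z (k - 1))) a := by
    intro z
    rw [lieDeriv, (hasFDerivAt_mulVecOut m n C a z).fderiv]
    simp [Matrix.mulVec, dotProduct]
  refine ⟨part1 x, ?_⟩
  have hfun : lieDeriv (fun y => A.mulVec (kronPow y (k - 1))) (fun y => C.mulVec y a)
      = fun z => C.mulVec (A.mulVec (kronPow z (k - 1))) a := funext part1
  rw [hfun, lieDeriv, (hasFDerivAt_H n k m A C a x).fderiv]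
  simp only [ContinuousLinearMap.coe_sum', Finset.sum_apply, ContinuousLinearMap.coe_smul',
    Pi.smul_apply, ContinuousLinearMap.proj_apply, smul_eq_mul]
  -- expand the RHS
  have hsum : (∑ i : Fin (k - 1), kronFactor n k (k - 1) A i).mulVec
      (kronPow x ((k - 1) - 1 + (k - 1)))
      = fun w => ∑ i : Fin (k - 1),
          (kronFactor n k (k - 1) A i).mulVec (kronPow x ((k - 1) - 1 + (k - 1))) w := by
    funext w
    simp [Matrix.mulVec, dotProduct, Matrix.sum_apply, Finset.sum_mul]
    rw [Finset.sum_comm]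
  rw [hsum]
  simp only [Matrix.mulVec, dotProduct]
  refine Finset.sum_congr rfl fun b _ => ?_
  congr 1
  refine Finset.sum_congr rfl fun w _ => ?_
  congr 1
  refine Finset.sum_congr rfl fun s _ => ?_
  exact key n k A x s w hk

end
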